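/- arXiv:2210.09006 — 4 statements merged into one kernel-verified Lean document; each statement's English description precedes it below -/
import Mathlib

section
/- Define the convolution on M_n(ℂ) ⊗ M_n(ℂ) by x * y := F⁻¹(F(y)F(x)) with F(E_{kℓ} ⊗ E_{pq}) = E_{ℓq} ⊗ E_{kp}. If x and y are positive semidefinite elements of M_n(ℂ) ⊗ M_n(ℂ), then x * y is positive semidefinite (Schur product theorem for this convolution). -/
open Matrix
open scoped Kronecker ComplexOrder

/-!
Both `F` and `G` merely permute the four tensor legs, so entrywise
`G (F y * F x) (a, b) (c, d) = ∑ f e, y (a, f) (c, e) * x (f, b) (e, d)`.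
This is the compression `Vᴴ (y ⊗ₖ x) V` of the Kronecker product `y ⊗ₖ x`, where `V` contracts
the inner legs of `y` and `x` against the vector `∑ f, |f⟩ ⊗ |f⟩`; compressions of positive
semidefinite matrices are positive semidefinite.
-/

namespace Matrix

variable {R m n m' n' : Type*}

theorem linearMap_apply_of_map_single [CommSemiring R] [Fintype m] [Fintype n]
    [DecidableEq m] [DecidableEq n] [DecidableEq m'] [DecidableEq n']
    {f : Matrix m n R →ₗ[R] Matrix m' n' R} (e : m' × n' ≃ m × n)
    (hf : ∀ i j, f (single i j 1) = single (e.symm (i, j)).1 (e.symm (i, j)).2 1)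
    (z : Matrix m n R) (r : m') (s : n') :
    f z r s = z (e (r, s)).1 (e (r, s)).2 := by
  have hsum : f z r s =
      ∑ p : m × n, z p.1 p.2 * single (e.symm p).1 (e.symm p).2 (1 : R) r s := by
    conv_lhs => rw [matrix_eq_sum_single z]
    simp only [map_sum, sum_apply, ← Fintype.sum_prod_type']
    refine Finset.sum_congr rfl fun p _ => ?_
    have hsingle : single p.1 p.2 (z p.1 p.2) = z p.1 p.2 • single p.1 p.2 (1 : R) := by
      rw [smul_single, smul_eq_mul, mul_one]
    rw [hsingle, map_smul, hf]
    rfl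
  rw [hsum, Fintype.sum_eq_single (e (r, s))]
  · simp
  · intro p hp
    rw [single_apply_of_ne, mul_zero]
    exact fun h => hp (e.symm_apply_eq.mp (Prod.ext h.1 h.2))

/-- The column `(a, b)` is `∑ f, |a, f⟩ ⊗ |f, b⟩`. -/
def entangledInsertion (ι R : Type*) [Zero R] [One R] [DecidableEq ι] :
    Matrix ((ι × ι) × (ι × ι)) (ι × ι) R :=
  of fun p r => if p.1.1 = r.1 ∧ p.1.2 = p.2.1 ∧ p.2.2 = r.2 then 1 else 0

theorem conjTranspose_entangledInsertion_mul_mul_apply {ι : Type*} [Fintype ι] [DecidableEq ι]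
    [Semiring R] [StarRing R] (M : Matrix ((ι × ι) × (ι × ι)) ((ι × ι) × (ι × ι)) R)
    (r s : ι × ι) :
    ((entangledInsertion ι R)ᴴ * M * entangledInsertion ι R) r s =
      ∑ f, ∑ e, M ((r.1, f), (f, r.2)) ((s.1, e), (e, s.2)) := by
  simpa [mul_apply, entangledInsertion, Fintype.sum_prod_type, ite_and,
    apply_ite (star : R → R)] using Finset.sum_comm

end Matrix

/-- Schur product theorem for the convolution: if `x` and `y` are positive
semidefinite elements of `Mₙ(ℂ) ⊗ Mₙ(ℂ)`, then so is `x * y := F⁻¹(F(y)F(x))`. -/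
theorem stmt7 (n : ℕ)
    (F G : Matrix (Fin n × Fin n) (Fin n × Fin n) ℂ →ₗ[ℂ]
      Matrix (Fin n × Fin n) (Fin n × Fin n) ℂ)
    (hF : ∀ k l p q : Fin n,
      F (single k l (1 : ℂ) ⊗ₖ single p q (1 : ℂ)) =
        single l q (1 : ℂ) ⊗ₖ single k p (1 : ℂ))
    (hG : ∀ k l p q : Fin n,
      G (single k l (1 : ℂ) ⊗ₖ single p q (1 : ℂ)) =
        single p k (1 : ℂ) ⊗ₖ single q l (1 : ℂ))
    (x y : Matrix (Fin n × Fin n) (Fin n × Fin n) ℂ)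
    (hx : x.PosSemidef) (hy : y.PosSemidef) :
    (G (F y * F x)).PosSemidef := by
  have hF_apply (z : Matrix (Fin n × Fin n) (Fin n × Fin n) ℂ) (r s : Fin n × Fin n) :
      F z r s = z (r.2, s.2) (r.1, s.1) := by
    refine linearMap_apply_of_map_single
      ⟨fun rs => ((rs.1.2, rs.2.2), (rs.1.1, rs.2.1)),
        fun ij => ((ij.2.1, ij.1.1), (ij.2.2, ij.1.2)), fun _ => rfl, fun _ => rfl⟩
      (fun i j => ?_) z r s
    simpa [single_kronecker_single] using hF i.1 j.1 i.2 j.2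
  have hG_apply (z : Matrix (Fin n × Fin n) (Fin n × Fin n) ℂ) (r s : Fin n × Fin n) :
      G z r s = z (s.1, r.1) (s.2, r.2) := by
    refine linearMap_apply_of_map_single
      ⟨fun rs => ((rs.2.1, rs.1.1), (rs.2.2, rs.1.2)),
        fun ij => ((ij.1.2, ij.2.2), (ij.1.1, ij.2.1)), fun _ => rfl, fun _ => rfl⟩
      (fun i j => ?_) z r s
    simpa [single_kronecker_single] using hG i.1 j.1 i.2 j.2
  have hcompression : G (F y * F x) = (entangledInsertion (Fin n) ℂ)ᴴ * (y ⊗ₖ x) *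
      entangledInsertion (Fin n) ℂ := by
    ext r s
    rw [conjTranspose_entangledInsertion_mul_mul_apply, hG_apply, mul_apply,
      Fintype.sum_prod_type, Finset.sum_comm]
    simp [hF_apply]
  rw [hcompression]
  exact (hy.kronecker hx).conjTranspose_mul_mul_same _
end

section
/- Define the convolution on M_n(ℂ) ⊗ M_n(ℂ) by x * y := F⁻¹(F(y)F(x)) with F(E_{kℓ} ⊗ E_{pq}) = E_{ℓq} ⊗ E_{kp}. Then (x * y)* = (x*) * (y*) for all x, y ∈ M_n(ℂ) ⊗ M_n(ℂ), where * on single elements denotes the conjugate transpose. -/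
open Matrix
open scoped Kronecker

/-!
`F` and `G` only permute matrix entries, and `G = F⁻¹`. Under this permutation the adjoint
becomes `φ N := conj(N)` with both tensor factors of the row and column indices swapped, i.e.
`F (Mᴴ) = φ (F M)` and `(G N)ᴴ = G (φ N)`. Since `φ` is entrywise conjugation followed by a
simultaneous relabelling of rows and columns, it is multiplicative, so
`(G (F y * F x))ᴴ = G (φ (F y) * φ (F x)) = G (F yᴴ * F xᴴ)`.
-/

namespace Matrix

section PermuteEntries

variable {m n m' n' R : Type*} [Semiring R]

def permuteEntries (e : m' × n' ≃ m × n) : Matrix m n R →ₗ[R] Matrix m' n' R where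
  toFun M := of fun i j => M (e (i, j)).1 (e (i, j)).2
  map_add' _ _ := rfl
  map_smul' _ _ := rfl

@[simp]
theorem permuteEntries_apply (e : m' × n' ≃ m × n) (M : Matrix m n R) (i : m') (j : n') :
    permuteEntries e M i j = M (e (i, j)).1 (e (i, j)).2 :=
  rfl

variable [DecidableEq m] [DecidableEq n] [DecidableEq m'] [DecidableEq n']

theorem permuteEntries_single (e : m' × n' ≃ m × n) (a : m) (b : n) :
    permuteEntries e (single a b (1 : R)) = single (e.symm (a, b)).1 (e.symm (a, b)).2 1 := by
  ext i j
  rw [permuteEntries_apply, single_apply, single_apply]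
  refine if_congr ⟨?_, ?_⟩ rfl rfl <;> rintro ⟨rfl, rfl⟩ <;> simp

theorem eq_permuteEntries_of_map_single [Finite m] [Finite n]
    {L : Matrix m n R →ₗ[R] Matrix m' n' R} (e : m' × n' ≃ m × n)
    (hL : ∀ a b, L (single a b 1) = single (e.symm (a, b)).1 (e.symm (a, b)).2 1) :
    L = permuteEntries e :=
  ext_linearMap (R := R) fun a b => LinearMap.ext_ring <| by
    simpa only [LinearMap.comp_apply, singleLinearMap_apply, permuteEntries_single] using hL a b

end PermuteEntries

section ConjSwap

variable {ι R : Type*} [CommSemiring R] [StarRing R]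

def conjSwap (N : Matrix (ι × ι) (ι × ι) R) : Matrix (ι × ι) (ι × ι) R :=
  (N.map (starRingEnd R)).submatrix Prod.swap Prod.swap

theorem conjSwap_mul [Fintype ι] (A B : Matrix (ι × ι) (ι × ι) R) :
    conjSwap (A * B) = conjSwap A * conjSwap B := by
  rw [conjSwap, Matrix.map_mul]
  exact (submatrix_mul_equiv _ _ _ (Equiv.prodComm ι ι) _).symm

end ConjSwap

section Fourier

@[simps]
def fourierIndexEquiv (ι : Type*) : (ι × ι) × (ι × ι) ≃ (ι × ι) × (ι × ι) where
  toFun x := ((x.1.2, x.2.2), (x.1.1, x.2.1))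
  invFun x := ((x.2.1, x.1.1), (x.2.2, x.1.2))
  left_inv _ := rfl
  right_inv _ := rfl

variable {ι R : Type*} [CommSemiring R] [StarRing R]

theorem permuteEntries_fourier_conjTranspose (M : Matrix (ι × ι) (ι × ι) R) :
    permuteEntries (fourierIndexEquiv ι) Mᴴ = conjSwap (permuteEntries (fourierIndexEquiv ι) M) :=
  rfl

theorem conjTranspose_permuteEntries_fourier_symm (N : Matrix (ι × ι) (ι × ι) R) :
    (permuteEntries (fourierIndexEquiv ι).symm N)ᴴ =
      permuteEntries (fourierIndexEquiv ι).symm (conjSwap N) :=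
  rfl

end Fourier

end Matrix

/-- The convolution `x * y := F⁻¹(F(y)F(x))` is compatible with adjoints:
`(x * y)* = (x*) * (y*)`. -/
theorem stmt8 (n : ℕ)
    (F G : Matrix (Fin n × Fin n) (Fin n × Fin n) ℂ →ₗ[ℂ]
      Matrix (Fin n × Fin n) (Fin n × Fin n) ℂ)
    (hF : ∀ k l p q : Fin n,
      F (Matrix.single k l (1 : ℂ) ⊗ₖ Matrix.single p q (1 : ℂ)) =
        Matrix.single l q (1 : ℂ) ⊗ₖ Matrix.single k p (1 : ℂ))
    (hG : ∀ k l p q : Fin n,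
      G (Matrix.single k l (1 : ℂ) ⊗ₖ Matrix.single p q (1 : ℂ)) =
        Matrix.single p k (1 : ℂ) ⊗ₖ Matrix.single q l (1 : ℂ))
    (x y : Matrix (Fin n × Fin n) (Fin n × Fin n) ℂ) :
    (G (F y * F x))ᴴ = G (F yᴴ * F xᴴ) := by
  obtain rfl : F = permuteEntries (fourierIndexEquiv (Fin n)) :=
    eq_permuteEntries_of_map_single _ fun ⟨k, p⟩ ⟨l, q⟩ => by
      simpa [single_kronecker_single] using hF k l p q
  obtain rfl : G = permuteEntries (fourierIndexEquiv (Fin n)).symm :=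
    eq_permuteEntries_of_map_single _ fun ⟨k, p⟩ ⟨l, q⟩ => by
      simpa [single_kronecker_single] using hG k l p q
  rw [conjTranspose_permuteEntries_fourier_symm, conjSwap_mul,
    ← permuteEntries_fourier_conjTranspose, ← permuteEntries_fourier_conjTranspose]
end

section
/- Let G = ℤ/kℤ and let f : G → ℂ be a nonzero function with discrete Fourier transform f̂(χ) = (1/√k) Σ_{g∈G} f(g) χ(g)̄ for characters χ of G. Then |supp(f)| · |supp(f̂)| ≥ k (Donoho–Stark uncertainty principle for cyclic groups), which is the specialization of the subfactor Donoho–Stark inequality S(x)S(F(x)) ≥ κ₀²/[A:B]₀ to the inclusion arising from the ℤ_k-action on the noncommutative torus, where κ₀ = 1/√k-normalized traces give S(x) = |supp|/k. -/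
/-!
If `|Φ|` attains its maximum `m` at `j₀`, each Fourier coefficient is a sum of `|supp Φ|`
terms of size at most `m`, so `‖𝓕 Φ‖∞ ≤ |supp Φ| · m`. Fourier inversion gives
`N · Φ j₀ = 𝓕 (𝓕 Φ) (-j₀)`, a sum of `|supp 𝓕 Φ|` such coefficients, hence
`N · m ≤ |supp 𝓕 Φ| · |supp Φ| · m`. The `1/√k` normalisation does not change supports.
-/

open Finset Function ZMod

lemma sum_norm_le_ncard_support_mul {ι E : Type*} [Fintype ι] [SeminormedAddCommGroup E]
    (Φ : ι → E) {M : ℝ} (hM : ∀ j, ‖Φ j‖ ≤ M) :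
    ∑ j, ‖Φ j‖ ≤ (support Φ).ncard * M := by
  classical
  calc ∑ j, ‖Φ j‖ = ∑ j ∈ (support Φ).toFinset, ‖Φ j‖ :=
        (sum_subset (subset_univ _) fun j _ hj => by simp_all).symm
    _ ≤ (support Φ).toFinset.card • M := sum_le_card_nsmul _ _ _ fun j _ => hM j
    _ = (support Φ).ncard * M := by rw [nsmul_eq_mul, Set.ncard_eq_toFinset_card']

namespace ZMod

variable {N : ℕ} [NeZero N] {E : Type*}

lemma norm_dft_le_ncard_support_mul [SeminormedAddCommGroup E] [NormedSpace ℂ E]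
    (Φ : ZMod N → E) {M : ℝ} (hM : ∀ j, ‖Φ j‖ ≤ M) (k : ZMod N) :
    ‖𝓕 Φ k‖ ≤ (support Φ).ncard * M :=
  calc ‖𝓕 Φ k‖ ≤ ∑ j, ‖stdAddChar (-(j * k)) • Φ j‖ := norm_sum_le _ _
    _ = ∑ j, ‖Φ j‖ := by simp [norm_smul, stdAddChar_apply, Circle.norm_coe]
    _ ≤ (support Φ).ncard * M := sum_norm_le_ncard_support_mul Φ hM

theorem le_ncard_support_mul_ncard_support_dft [NormedAddCommGroup E] [NormedSpace ℂ E]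
    {Φ : ZMod N → E} (hΦ : Φ ≠ 0) :
    N ≤ (support Φ).ncard * (support (𝓕 Φ)).ncard := by
  obtain ⟨j₀, hmax⟩ := Finite.exists_max fun j => ‖Φ j‖
  have hpos : 0 < ‖Φ j₀‖ := by
    obtain ⟨j, hj⟩ := Function.ne_iff.1 hΦ
    exact (norm_pos_iff.2 hj).trans_le (hmax j)
  have hdft : ∀ k, ‖𝓕 Φ k‖ ≤ (support Φ).ncard * ‖Φ j₀‖ :=
    norm_dft_le_ncard_support_mul Φ hmax
  have key : (N : ℝ) * ‖Φ j₀‖ ≤ (support Φ).ncard * (support (𝓕 Φ)).ncard * ‖Φ j₀‖ :=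
    calc (N : ℝ) * ‖Φ j₀‖ = ‖𝓕 (𝓕 Φ) (-j₀)‖ := by simp [dft_dft, norm_smul]
      _ ≤ (support (𝓕 Φ)).ncard * ((support Φ).ncard * ‖Φ j₀‖) :=
        norm_dft_le_ncard_support_mul _ hdft _
      _ = _ := by ring
  exact_mod_cast le_of_mul_le_mul_right key hpos

lemma conj_exp_eq_stdAddChar (g h : ZMod N) :
    (starRingEnd ℂ) (Complex.exp (2 * Real.pi * Complex.I * (g.val * h.val : ℕ) / N)) =
      stdAddChar (-(h * g)) := by
  rw [AddChar.map_neg_eq_conj, ← toCircle_natCast, stdAddChar_apply]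
  push_cast
  simp [mul_comm]

end ZMod

/-- Donoho–Stark uncertainty principle for cyclic groups: for any nonzero
`f : ℤ/kℤ → ℂ` with discrete Fourier transform
`f̂(g) = (1/√k) ∑_h f(h) · conj(χ_g(h))`, where `χ_g(h) = e^{2πi·gh/k}` are the characters
of `ℤ/kℤ`, one has `|supp f| · |supp f̂| ≥ k`. -/
theorem stmt18 (k : ℕ) [NeZero k] (f : ZMod k → ℂ) (hf : f ≠ 0)
    (fhat : ZMod k → ℂ)
    (hfhat : ∀ g : ZMod k, fhat g = (Real.sqrt k : ℂ)⁻¹ *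
      ∑ h : ZMod k, f h *
        (starRingEnd ℂ) (Complex.exp (2 * Real.pi * Complex.I * (g.val * h.val : ℕ) / k)) ) :
    k ≤ (Function.support f).ncard * (Function.support fhat).ncard := by
  have hfhat_eq : fhat = (Real.sqrt k : ℂ)⁻¹ • 𝓕 f := by
    ext g
    simp only [hfhat, conj_exp_eq_stdAddChar, dft_apply, Pi.smul_apply, smul_eq_mul, mul_comm (f _)]
  have hscale : (Real.sqrt k : ℂ)⁻¹ ≠ 0 := by
    simpa using (NeZero.ne k)
  rw [hfhat_eq, support_const_smul_of_ne_zero _ _ hscale]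
  exact le_ncard_support_mul_ncard_support_dft hf
end

section
/- Define the convolution on M_n(ℂ) ⊗ M_n(ℂ) by x * y := F⁻¹(F(y)F(x)) with F(E_{kℓ} ⊗ E_{pq}) = E_{ℓq} ⊗ E_{kp}, and let tr be the normalized trace. Then the Frobenius reciprocity identity tr((x * y) z) = tr(x (z * ρ(y))) holds for all x, y, z ∈ M_n(ℂ) ⊗ M_n(ℂ), where ρ(E_{ij} ⊗ E_{kℓ}) = E_{ℓk} ⊗ E_{ji} is the rotation map. -/
open Matrix
open scoped Kronecker

/-!
`F`, `G` and `ρ` send matrix units to matrix units, so each of them merely permutes the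
entries of a matrix. Written out in entries, both sides of the identity become sums, over
six indices, of products of one entry each of `x`, `y` and `z`, and a bijective change of
summation indices carries one sum to the other.
-/

/-- The normalized trace on matrices (`tr 1 = 1`). -/
noncomputable def ntr {I : Type*} [Fintype I] (x : Matrix I I ℂ) : ℂ :=
  (Fintype.card I : ℂ)⁻¹ * Matrix.trace x

namespace Matrix

variable {R m n m' n' : Type*} [Semiring R] [Finite m] [Finite n]
  [DecidableEq m] [DecidableEq n] [DecidableEq m'] [DecidableEq n']

theorem linearMap_apply_of_map_single_one {T : Matrix m n R →ₗ[R] Matrix m' n' R}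
    (e : m × n ≃ m' × n')
    (hT : ∀ i j, T (single i j 1) = single (e (i, j)).1 (e (i, j)).2 1)
    (M : Matrix m n R) (a : m') (c : n') :
    T M a c = M (e.symm (a, c)).1 (e.symm (a, c)).2 := by
  suffices h : entryLinearMap R R a c ∘ₗ T =
      entryLinearMap R R (e.symm (a, c)).1 (e.symm (a, c)).2 from LinearMap.congr_fun h M
  refine ext_linearMap _ fun i j => LinearMap.ext_ring ?_
  have hpos : (e (i, j)).1 = a ∧ (e (i, j)).2 = c ↔
      i = (e.symm (a, c)).1 ∧ j = (e.symm (a, c)).2 := by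
    simpa only [Prod.ext_iff] using (e.eq_symm_apply (x := (a, c)) (y := (i, j))).symm
  simp [hT, single_apply, hpos]

end Matrix

/-- Frobenius reciprocity: with the convolution `x * y := F⁻¹(F(y)F(x))`
and the rotation `ρ`, one has `tr((x * y) z) = tr(x (z * ρ(y)))`. -/
theorem stmt19 (n : ℕ)
    (F G : Matrix (Fin n × Fin n) (Fin n × Fin n) ℂ →ₗ[ℂ]
      Matrix (Fin n × Fin n) (Fin n × Fin n) ℂ)
    (hF : ∀ k l p q : Fin n,
      F (Matrix.single k l (1 : ℂ) ⊗ₖ Matrix.single p q (1 : ℂ)) =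
        Matrix.single l q (1 : ℂ) ⊗ₖ Matrix.single k p (1 : ℂ))
    (hG : ∀ k l p q : Fin n,
      G (Matrix.single k l (1 : ℂ) ⊗ₖ Matrix.single p q (1 : ℂ)) =
        Matrix.single p k (1 : ℂ) ⊗ₖ Matrix.single q l (1 : ℂ))
    (ρ : Matrix (Fin n × Fin n) (Fin n × Fin n) ℂ →ₗ[ℂ]
      Matrix (Fin n × Fin n) (Fin n × Fin n) ℂ)
    (hρ : ∀ i j k l : Fin n,
      ρ (Matrix.single i j (1 : ℂ) ⊗ₖ Matrix.single k l (1 : ℂ)) =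
        Matrix.single l k (1 : ℂ) ⊗ₖ Matrix.single j i (1 : ℂ))
    (x y z : Matrix (Fin n × Fin n) (Fin n × Fin n) ℂ) :
    ntr (G (F y * F x) * z) = ntr (x * G (F (ρ y) * F z)) := by
  have hF' : ∀ M a c, F M a c = M (a.2, c.2) (a.1, c.1) :=
    linearMap_apply_of_map_single_one (m := Fin n × Fin n) (n := Fin n × Fin n)
      ⟨fun ((k, p), (l, q)) => ((l, k), (q, p)), fun ((l, k), (q, p)) => ((k, p), (l, q)),
        fun _ => rfl, fun _ => rfl⟩
      fun ⟨k, p⟩ ⟨l, q⟩ => by simpa [single_kronecker_single] using hF k l p q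
  have hG' : ∀ M a c, G M a c = M (c.1, a.1) (c.2, a.2) :=
    linearMap_apply_of_map_single_one (m := Fin n × Fin n) (n := Fin n × Fin n)
      ⟨fun ((k, p), (l, q)) => ((p, q), (k, l)), fun ((p, q), (k, l)) => ((k, p), (l, q)),
        fun _ => rfl, fun _ => rfl⟩
      fun ⟨k, p⟩ ⟨l, q⟩ => by simpa [single_kronecker_single] using hG k l p q
  have hρ' : ∀ M a c, ρ M a c = M (c.2, c.1) (a.2, a.1) :=
    linearMap_apply_of_map_single_one (m := Fin n × Fin n) (n := Fin n × Fin n)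
      ⟨fun ((i, k), (j, l)) => ((l, j), (k, i)), fun ((l, j), (k, i)) => ((i, k), (j, l)),
        fun _ => rfl, fun _ => rfl⟩
      fun ⟨i, k⟩ ⟨j, l⟩ => by simpa [single_kronecker_single] using hρ i j k l
  unfold ntr
  congr 1
  simp only [trace, diag, mul_apply, hF', hG', hρ', Finset.sum_mul, Finset.mul_sum]
  simp only [← Fintype.sum_prod_type']
  exact Fintype.sum_equiv
    ⟨fun (u, v, w) => ((w.2, u.2), (w.1, v.2), (u.1, v.1)),
      fun (a, b, c) => ((c.1, a.2), (c.2, b.2), (b.1, a.1)), fun _ => rfl, fun _ => rfl⟩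
    _ _ fun _ => by simp only [Equiv.coe_fn_mk]; ring
end
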